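/- arXiv:2006.02925 — 4 statements merged into one kernel-verified Lean document; each statement's English description precedes it below -/
import Mathlib

section
/- Let S be an aperiodic Borel automorphism of a standard Borel space (X, ℬ). Then there exists a decreasing sequence (A_n)_{n≥1} of Borel sets such that: (i) for each n, both A_n and X \ A_n meet every S-orbit (i.e., ⋃_{i∈ℤ} S^i A_n = ⋃_{i∈ℤ} S^i (X \ A_n) = X); (ii) for each n, the sets A_n, S(A_n), ..., S^{n-1}(A_n) are pairwise disjoint; and (iii) ⋂_{n≥1} A_n is a wandering set for S. -/
open MeasureTheory Set

set_option linter.unusedSectionVars false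

namespace Stmt5Aux

variable {X : Type*} [MeasurableSpace X]

/-- Half-space / complement family indexed by a rational and a bool. -/
def bset (f : X → ℝ) (p : ℚ × Bool) : Set X :=
  if p.2 then {x | f x < (p.1 : ℝ)} else {x | (p.1 : ℝ) ≤ f x}

lemma bset_meas {f : X → ℝ} (hf : Measurable f) (p : ℚ × Bool) :
    MeasurableSet (bset f p) := by
  unfold bset; split
  · exact measurableSet_lt hf measurable_const
  · exact measurableSet_le measurable_const hf

lemma bset_sep {f : X → ℝ} {x z : X} (h : f x ≠ f z) :
    ∃ p, x ∈ bset f p ∧ z ∉ bset f p := by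
  rcases lt_or_gt_of_ne h with h | h
  · obtain ⟨q, hq1, hq2⟩ := exists_rat_btwn h
    refine ⟨(q, true), ?_, ?_⟩ <;> simp [bset]
    · exact hq1
    · exact hq2.le
  · obtain ⟨q, hq1, hq2⟩ := exists_rat_btwn h
    refine ⟨(q, false), ?_, ?_⟩ <;> simp [bset]
    · exact hq2.le
    · exact hq1

lemma meas_npow (S : Equiv.Perm X) (hS : Measurable S) : ∀ n : ℕ, Measurable ⇑(S ^ n)
  | 0 => by simpa using measurable_id
  | (n+1) => by
      have : ⇑(S ^ (n+1)) = ⇑(S ^ n) ∘ ⇑S := by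
        ext x; simp [pow_succ, Equiv.Perm.mul_apply]
      rw [this]; exact (meas_npow S hS n).comp hS

lemma meas_zpow (S : Equiv.Perm X) (hS : Measurable S) (hS' : Measurable S.symm) :
    ∀ t : ℤ, Measurable ⇑(S ^ t)
  | (Int.ofNat n) => by
      have : (S ^ (Int.ofNat n)) = S ^ n := by
        rw [Int.ofNat_eq_coe, zpow_natCast]
      rw [this]; exact meas_npow S hS n
  | (Int.negSucc n) => by
      have : (S ^ (Int.negSucc n)) = (S⁻¹) ^ (n+1) := by
        rw [zpow_negSucc, inv_pow]
      rw [this]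
      exact meas_npow S⁻¹ (by simpa [Equiv.Perm.inv_def] using hS') (n+1)


/-- Candidate marker sets: points in a prescribed cell whose next `m` iterates
avoid prescribed cells. -/
def Dset (f : X → ℝ) (S : Equiv.Perm X) (m : ℕ) (g : Fin m → ℚ × Bool) : Set X :=
  ⋂ i : Fin m, bset f (g i) ∩ (fun x => (S ^ ((i : ℕ) + 1)) x) ⁻¹' (bset f (g i))ᶜ

lemma mem_Dset {f : X → ℝ} {S : Equiv.Perm X} {m : ℕ} {g : Fin m → ℚ × Bool} {x : X} :
    x ∈ Dset f S m g ↔ ∀ i : Fin m, x ∈ bset f (g i) ∧ (S ^ ((i : ℕ) + 1)) x ∉ bset f (g i) := by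
  simp [Dset]

lemma Dset_disc {f : X → ℝ} {S : Equiv.Perm X} {m : ℕ} {g : Fin m → ℚ × Bool} {x : X}
    {j : ℕ} (hj1 : 1 ≤ j) (hj2 : j ≤ m)
    (h1 : x ∈ Dset f S m g) (h2 : (S ^ j) x ∈ Dset f S m g) : False := by
  have hi : j - 1 < m := by omega
  have e1 := (mem_Dset.1 h1 ⟨j - 1, hi⟩).2
  have e2 := (mem_Dset.1 h2 ⟨j - 1, hi⟩).1
  have : (j - 1) + 1 = j := by omega
  rw [this] at e1
  exact e1 e2

lemma Dset_cover {f : X → ℝ} (hf : Function.Injective f) {S : Equiv.Perm X}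
    (haper : ∀ (x : X) (n : ℤ), n ≠ 0 → (S ^ n) x ≠ x) (m : ℕ) (x : X) :
    ∃ g : Fin m → ℚ × Bool, x ∈ Dset f S m g := by
  have key : ∀ i : Fin m, ∃ p, x ∈ bset f p ∧ (S ^ ((i : ℕ) + 1)) x ∉ bset f p := by
    intro i
    have hne : (S ^ ((i : ℕ) + 1)) x ≠ x := by
      have h := haper x (((i : ℕ) + 1 : ℕ) : ℤ) (by positivity)
      rwa [zpow_natCast] at h
    exact bset_sep (fun h => hne (hf h.symm))
  choose g hg using key
  exact ⟨g, mem_Dset.2 fun i => hg i⟩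


/-- Greedy construction of a maximal `m`-discrete set from countably many
`m`-discrete pieces `D k`, inside an ambient set `R`. -/
def greedy (S : Equiv.Perm X) (m : ℕ) (D : ℕ → Set X) (R : Set X) : ℕ → Set X
  | 0 => ∅
  | (k+1) => greedy S m D R k ∪
      ((R ∩ D k) \ ⋃ t ∈ Finset.Icc (-(m : ℤ)) (m : ℤ), (fun x => (S ^ t) x) ⁻¹' greedy S m D R k)

def GU (S : Equiv.Perm X) (m : ℕ) (D : ℕ → Set X) (R : Set X) : Set X :=
  ⋃ k, greedy S m D R k

lemma greedy_mono (S : Equiv.Perm X) (m : ℕ) (D : ℕ → Set X) (R : Set X) :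
    Monotone (greedy S m D R) :=
  monotone_nat_of_le_succ fun k => by
    rw [greedy]; exact subset_union_left

lemma greedy_subset (S : Equiv.Perm X) (m : ℕ) (D : ℕ → Set X) (R : Set X) :
    ∀ k, greedy S m D R k ⊆ R
  | 0 => by rw [greedy]; exact empty_subset R
  | (k+1) => by
      rw [greedy]
      exact union_subset (greedy_subset S m D R k)
        ((diff_subset).trans inter_subset_left)

lemma GU_subset (S : Equiv.Perm X) (m : ℕ) (D : ℕ → Set X) (R : Set X) :
    GU S m D R ⊆ R :=
  iUnion_subset (greedy_subset S m D R)

lemma greedy_meas {S : Equiv.Perm X} (hzp : ∀ t : ℤ, Measurable ⇑(S ^ t)) (m : ℕ)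
    {D : ℕ → Set X} (hD : ∀ k, MeasurableSet (D k)) {R : Set X} (hR : MeasurableSet R) :
    ∀ k, MeasurableSet (greedy S m D R k)
  | 0 => by rw [greedy]; exact MeasurableSet.empty
  | (k+1) => by
      rw [greedy]
      refine (greedy_meas hzp m hD hR k).union (((hR.inter (hD k)).diff ?_))
      refine MeasurableSet.biUnion (Finset.Icc _ _).countable_toSet fun t _ => ?_
      exact (hzp t) (greedy_meas hzp m hD hR k)

lemma GU_meas {S : Equiv.Perm X} (hzp : ∀ t : ℤ, Measurable ⇑(S ^ t)) (m : ℕ)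
    {D : ℕ → Set X} (hD : ∀ k, MeasurableSet (D k)) {R : Set X} (hR : MeasurableSet R) :
    MeasurableSet (GU S m D R) :=
  MeasurableSet.iUnion (greedy_meas hzp m hD hR)

lemma GU_disc {S : Equiv.Perm X} {m : ℕ} {D : ℕ → Set X} {R : Set X}
    (hD : ∀ k {x : X} {j : ℕ}, 1 ≤ j → j ≤ m → x ∈ D k → (S ^ j) x ∈ D k → False)
    {x : X} {j : ℕ} (hj1 : 1 ≤ j) (hj2 : j ≤ m)
    (h1 : x ∈ GU S m D R) (h2 : (S ^ j) x ∈ GU S m D R) : False := by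
  obtain ⟨_, ⟨k1, rfl⟩, hk1⟩ := h1
  obtain ⟨_, ⟨k2, rfl⟩, hk2⟩ := h2
  have key : ∀ N, x ∈ greedy S m D R N → (S ^ j) x ∈ greedy S m D R N → False := by
    intro N
    induction N with
    | zero => intro h1 _; rw [greedy] at h1; exact h1
    | succ k ih =>
      intro hk1' hk2'
      rw [greedy] at hk1' hk2'
      rcases hk1' with h1 | h1 <;> rcases hk2' with h2 | h2
      · exact ih h1 h2
      · refine h2.2 ?_
        refine mem_biUnion (?_ : (-(j : ℤ)) ∈ Finset.Icc (-(m : ℤ)) (m : ℤ)) ?_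
        · simp only [Finset.mem_Icc]; omega
        · show (S ^ (-(j : ℤ))) ((S ^ j) x) ∈ greedy S m D R k
          have : (S ^ (-(j : ℤ))) ((S ^ j) x) = x := by
            rw [← zpow_natCast S j, ← Equiv.Perm.mul_apply, ← zpow_add]
            simp
          rwa [this]
      · refine h1.2 ?_
        refine mem_biUnion (?_ : ((j : ℤ)) ∈ Finset.Icc (-(m : ℤ)) (m : ℤ)) ?_
        · simp only [Finset.mem_Icc]; omega
        · show (S ^ ((j : ℤ))) x ∈ greedy S m D R k
          rwa [zpow_natCast]
      · exact hD k hj1 hj2 h1.1.2 h2.1.2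
  exact key (max k1 k2) (greedy_mono S m D R (le_max_left _ _) hk1)
    (greedy_mono S m D R (le_max_right _ _) hk2)

lemma GU_reach {S : Equiv.Perm X} {m : ℕ} {D : ℕ → Set X} {R : Set X} {x : X} {k : ℕ}
    (hxR : x ∈ R) (hxD : x ∈ D k) : ∃ t : ℤ, |t| ≤ (m : ℤ) ∧ (S ^ t) x ∈ GU S m D R := by
  by_cases h : x ∈ greedy S m D R (k+1)
  · exact ⟨0, by simp, by rw [zpow_zero]; exact mem_iUnion.2 ⟨k+1, by simpa using h⟩⟩
  · rw [greedy, mem_union, not_or] at h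
    have h2 : x ∈ ⋃ t ∈ Finset.Icc (-(m : ℤ)) (m : ℤ), (fun x => (S ^ t) x) ⁻¹' greedy S m D R k := by
      by_contra hc
      exact h.2 ⟨⟨hxR, hxD⟩, hc⟩
    simp only [mem_iUnion, Finset.mem_Icc, mem_preimage, exists_prop] at h2
    obtain ⟨t, ht1, ht2⟩ := h2
    exact ⟨t, abs_le.2 ht1, mem_iUnion.2 ⟨k, ht2⟩⟩


/-- The decreasing tower of marker sets. -/
def Gtower (f : X → ℝ) (S : Equiv.Perm X) (e : ∀ m : ℕ, ℕ → (Fin m → ℚ × Bool)) : ℕ → Set X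
  | 0 => GU S 1 (fun k => Dset f S 1 (e 1 k)) univ
  | (n+1) => GU S (n+2) (fun k => Dset f S (n+2) (e (n+2) k)) (Gtower f S e n)

lemma Gtower_succ_subset (f : X → ℝ) (S : Equiv.Perm X) (e : ∀ m : ℕ, ℕ → (Fin m → ℚ × Bool))
    (n : ℕ) : Gtower f S e (n+1) ⊆ Gtower f S e n := by
  rw [Gtower]; exact GU_subset _ _ _ _

lemma Dset_meas {f : X → ℝ} (hf : Measurable f) {S : Equiv.Perm X}
    (hS : Measurable S) (m : ℕ) (g : Fin m → ℚ × Bool) :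
    MeasurableSet (Dset f S m g) := by
  refine MeasurableSet.iInter fun i => (bset_meas hf _).inter ?_
  exact (meas_npow S hS _) (bset_meas hf _).compl

lemma Gtower_meas {f : X → ℝ} (hf : Measurable f) {S : Equiv.Perm X}
    (hS : Measurable S) (hS' : Measurable S.symm)
    (e : ∀ m : ℕ, ℕ → (Fin m → ℚ × Bool)) :
    ∀ n, MeasurableSet (Gtower f S e n)
  | 0 => by
      rw [Gtower]
      exact GU_meas (meas_zpow S hS hS') 1 (fun k => Dset_meas hf hS 1 _) MeasurableSet.univ
  | (n+1) => by
      rw [Gtower]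
      exact GU_meas (meas_zpow S hS hS') (n+2) (fun k => Dset_meas hf hS (n+2) _)
        (Gtower_meas hf hS hS' e n)

lemma Gtower_disc (f : X → ℝ) (S : Equiv.Perm X) (e : ∀ m : ℕ, ℕ → (Fin m → ℚ × Bool))
    (n : ℕ) {x : X} {j : ℕ} (hj1 : 1 ≤ j) (hj2 : j ≤ n + 1)
    (h1 : x ∈ Gtower f S e n) (h2 : (S ^ j) x ∈ Gtower f S e n) : False := by
  cases n with
  | zero =>
    rw [Gtower] at h1 h2
    exact GU_disc (fun k _ _ a b c d => Dset_disc a b c d) hj1 hj2 h1 h2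
  | succ n =>
    rw [Gtower] at h1 h2
    exact GU_disc (fun k _ _ a b c d => Dset_disc a b c d) hj1 (by omega) h1 h2

lemma Gtower_complete {f : X → ℝ} (hf : Function.Injective f) {S : Equiv.Perm X}
    (haper : ∀ (x : X) (n : ℤ), n ≠ 0 → (S ^ n) x ≠ x)
    {e : ∀ m : ℕ, ℕ → (Fin m → ℚ × Bool)} (he : ∀ m, Function.Surjective (e m)) :
    ∀ n (x : X), ∃ i : ℤ, (S ^ i) x ∈ Gtower f S e n
  | 0, x => by
      obtain ⟨g, hg⟩ := Dset_cover hf haper 1 x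
      obtain ⟨k, rfl⟩ := he 1 g
      obtain ⟨t, _, ht⟩ := GU_reach (D := fun k => Dset f S 1 (e 1 k)) (k := k) (mem_univ x) hg
      exact ⟨t, by rw [Gtower]; exact ht⟩
  | (n+1), x => by
      obtain ⟨i, hi⟩ := Gtower_complete hf haper he n x
      obtain ⟨g, hg⟩ := Dset_cover hf haper (n+2) ((S ^ i) x)
      obtain ⟨k, rfl⟩ := he (n+2) g
      obtain ⟨t, _, ht⟩ := GU_reach (D := fun k => Dset f S (n+2) (e (n+2) k)) (k := k) hi hg
      refine ⟨t + i, ?_⟩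
      rw [Gtower, zpow_add, Equiv.Perm.mul_apply]
      exact ht


end Stmt5Aux

/-- Weiss: markers for an aperiodic Borel automorphism, whose
intersection is a wandering set. -/
theorem stmt5 {X : Type*} [MeasurableSpace X] [StandardBorelSpace X]
    (S : Equiv.Perm X) (hS : Measurable S) (hS' : Measurable S.symm)
    (haper : ∀ (x : X) (n : ℤ), n ≠ 0 → (S ^ n) x ≠ x) :
    ∃ A : ℕ → Set X,
      (∀ n, MeasurableSet (A n)) ∧ Antitone A ∧
      (∀ (n : ℕ) (x : X), ∃ i : ℤ, (S ^ i) x ∈ A n) ∧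
      (∀ (n : ℕ) (x : X), ∃ i : ℤ, (S ^ i) x ∉ A n) ∧
      (∀ (n : ℕ) (i j : ℕ), i < n → j < n → i ≠ j →
        Disjoint ((fun x => (S ^ i) x) '' A n) ((fun x => (S ^ j) x) '' A n)) ∧
      (∀ i j : ℤ, i ≠ j →
        Disjoint ((fun x => (S ^ i) x) '' ⋂ n : ℕ, A n)
          ((fun x => (S ^ j) x) '' ⋂ n : ℕ, A n)) := by
  classical
  set f := embeddingReal X with hfdef
  have hfm : Measurable f := measurable_embeddingReal X
  have hfi : Function.Injective f := (measurableEmbedding_embeddingReal X).injective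
  choose e he using fun m => exists_surjective_nat (Fin m → ℚ × Bool)
  set G := Stmt5Aux.Gtower f S e with hGdef
  refine ⟨G, Stmt5Aux.Gtower_meas hfm hS hS' e,
    antitone_nat_of_succ_le (Stmt5Aux.Gtower_succ_subset f S e),
    fun n x => Stmt5Aux.Gtower_complete hfi haper he n x, ?_, ?_, ?_⟩
  · -- complement is a complete section
    intro n x
    by_cases hx : x ∈ G n
    · refine ⟨1, fun hc => ?_⟩
      have h1 : (S ^ (1:ℕ)) x ∈ G n := by
        rw [pow_one]
        rwa [zpow_one] at hc
      exact Stmt5Aux.Gtower_disc f S e n le_rfl (by omega) hx h1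
    · exact ⟨0, by simpa using hx⟩
  · -- pairwise disjointness of the first n iterates
    have main : ∀ (n i j : ℕ), i < j → j < n →
        Disjoint ((fun x => (S ^ i) x) '' G n) ((fun x => (S ^ j) x) '' G n) := by
      intro n i j hij hjn
      rw [Set.disjoint_left]
      rintro _ ⟨a, ha, rfl⟩ ⟨b, hb, hab⟩
      have hj' : (S ^ j) b = (S ^ i) ((S ^ (j - i)) b) := by
        rw [← Equiv.Perm.mul_apply, ← pow_add]
        congr 2
        omega
      change (S ^ j) b = (S ^ i) a at hab
      have hab' : a = (S ^ (j - i)) b := by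
        apply (S ^ i).injective
        rw [← hab]
        exact hj' 
      exact Stmt5Aux.Gtower_disc f S e n (j := j - i) (by omega) (by omega) hb
        (by rwa [← hab'])
    intro n i j hi hj hij
    rcases Nat.lt_or_ge i j with h | h
    · exact main n i j h hj
    · exact (main n j i (by omega) hi).symm
  · -- the intersection is wandering
    have main : ∀ i j : ℤ, i < j →
        Disjoint ((fun x => (S ^ i) x) '' ⋂ n : ℕ, G n)
          ((fun x => (S ^ j) x) '' ⋂ n : ℕ, G n) := by
      intro i j hij
      rw [Set.disjoint_left]
      rintro _ ⟨a, ha, rfl⟩ ⟨b, hb, hab⟩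
      set d : ℕ := (j - i).toNat with hd
      have hd1 : 1 ≤ d := by omega
      have hdz : (d : ℤ) = j - i := by omega
      have hj' : (S ^ j) b = (S ^ i) ((S ^ d) b) := by
        rw [← zpow_natCast S d, ← Equiv.Perm.mul_apply, ← zpow_add, hdz]
        congr 2
        omega
      change (S ^ j) b = (S ^ i) a at hab
      have hab' : a = (S ^ d) b := by
        apply (S ^ i).injective
        rw [← hab]
        exact hj' 
      have hbn : b ∈ G (d - 1) := (mem_iInter.1 hb) (d - 1)
      have han : (S ^ d) b ∈ G (d - 1) := by
        rw [← hab']; exact (mem_iInter.1 ha) (d - 1)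
      exact Stmt5Aux.Gtower_disc f S e (d - 1) hd1 (by omega) hbn han
    intro i j hij
    rcases lt_or_gt_of_ne hij with h | h
    · exact main i j h
    · exact (main j i h).symm
end

section
/- Let S be an aperiodic Borel automorphism of a standard Borel space X. Then there exists a decreasing sequence (B_n)_{n≥1} of Borel sets such that each B_n is a complete section for S whose complement is also a complete section, the sets B_n, S(B_n), ..., S^{n-1}(B_n) are pairwise disjoint for each n, and ⋂_{n≥1} B_n = ∅ (a vanishing sequence of markers). -/
/-!
For each `N`, join two points of an orbit when they are at most `N` steps apart. This graph is
locally finite with Borel neighbourhoods, so pulling back rational intervals along a Borel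
embedding into `ℝ` gives a countable Borel cover by independent sets, and running through this
cover greedily yields a Borel maximal independent set inside any Borel set. Iterating inside the
previous set with `N = 1, 2, …` gives a decreasing sequence of `N`-separated sets `D N`, each
meeting every orbit unboundedly often by maximality. Their intersection meets each orbit at most
once, so removing it from the `D (n + 1)` leaves vanishing markers.
-/

open MeasureTheory Set

namespace SimpleGraph

variable {X : Type*} (G : SimpleGraph X)

def HasMeasurableNeighborhoods [MeasurableSpace X] : Prop :=
  ∀ A : Set X, MeasurableSet A → MeasurableSet {x | ∃ y ∈ A, G.Adj x y}

def greedyStage (V : ℕ → Set X) (P : Set X) : ℕ → Set X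
  | 0 => ∅
  | k + 1 =>
    greedyStage V P k ∪ {x | x ∈ P ∩ V k ∧ ∀ y ∈ greedyStage V P k, ¬ G.Adj x y}

def greedyIndepSet (V : ℕ → Set X) (P : Set X) : Set X :=
  ⋃ k, G.greedyStage V P k

variable {G} {V : ℕ → Set X} {P : Set X}

theorem greedyStage_mono : Monotone (G.greedyStage V P) :=
  monotone_nat_of_le_succ fun _ => subset_union_left

theorem greedyIndepSet_subset : G.greedyIndepSet V P ⊆ P := by
  refine iUnion_subset fun k => ?_
  induction k with
  | zero => exact empty_subset P
  | succ k ih => exact union_subset ih fun x hx => hx.1.1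

theorem isIndepSet_greedyStage (hV : ∀ k, G.IsIndepSet (V k)) (k : ℕ) :
    G.IsIndepSet (G.greedyStage V P k) := by
  induction k with
  | zero => exact pairwise_empty _
  | succ k ih =>
    refine pairwise_union.2 ⟨ih, (hV k).mono fun x hx => hx.1.2, ?_⟩
    exact fun x hx y hy _ => ⟨fun hxy => hy.2 x hx hxy.symm, hy.2 x hx⟩

theorem isIndepSet_greedyIndepSet (hV : ∀ k, G.IsIndepSet (V k)) :
    G.IsIndepSet (G.greedyIndepSet V P) :=
  (pairwise_iUnion greedyStage_mono.directed_le).2 (isIndepSet_greedyStage hV)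

variable (G) in
theorem mem_greedyIndepSet_or_exists_adj (hcover : ∀ x, ∃ k, x ∈ V k) {x : X} (hx : x ∈ P) :
    x ∈ G.greedyIndepSet V P ∨ ∃ y ∈ G.greedyIndepSet V P, G.Adj x y := by
  obtain ⟨k, hk⟩ := hcover x
  by_cases h : ∃ y ∈ G.greedyStage V P k, G.Adj x y
  · obtain ⟨y, hy, hxy⟩ := h
    exact Or.inr ⟨y, mem_iUnion_of_mem k hy, hxy⟩
  · push Not at h
    exact Or.inl (mem_iUnion_of_mem (k + 1) (Or.inr ⟨⟨hx, hk⟩, h⟩))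

theorem measurableSet_greedyIndepSet [MeasurableSpace X] (hG : G.HasMeasurableNeighborhoods)
    (hV : ∀ k, MeasurableSet (V k)) (hP : MeasurableSet P) :
    MeasurableSet (G.greedyIndepSet V P) := by
  refine MeasurableSet.iUnion fun k => ?_
  induction k with
  | zero => exact MeasurableSet.empty
  | succ k ih =>
    have h : {x | x ∈ P ∩ V k ∧ ∀ y ∈ G.greedyStage V P k, ¬ G.Adj x y} =
        (P ∩ V k) \ {x | ∃ y ∈ G.greedyStage V P k, G.Adj x y} := by
      ext x; simp only [mem_ofPred_eq, mem_sdiff, not_exists, not_and]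
    exact ih.union (h ▸ (hP.inter (hV k)).diff (hG _ ih))

theorem exists_measurableSet_isIndepSet_cover [MeasurableSpace X] [StandardBorelSpace X]
    (hfin : ∀ x, (G.neighborSet x).Finite) (hG : G.HasMeasurableNeighborhoods) :
    ∃ V : ℕ → Set X, (∀ k, MeasurableSet (V k)) ∧ (∀ k, G.IsIndepSet (V k)) ∧
      ∀ x, ∃ k, x ∈ V k := by
  obtain ⟨f, hf⟩ := exists_measurableEmbedding_real X
  obtain ⟨q, hq⟩ := exists_surjective_nat (ℚ × ℚ)
  set U : ℕ → Set X := fun k => f ⁻¹' Ioo ((q k).1 : ℝ) (q k).2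
  have hU : ∀ k, MeasurableSet (U k) := fun k => hf.measurable measurableSet_Ioo
  refine ⟨fun k => U k \ {x | ∃ y ∈ U k, G.Adj x y}, fun k => (hU k).diff (hG _ (hU k)),
    fun k x hx y hy _ hxy => hx.2 ⟨y, hy.1, hxy⟩, fun x => ?_⟩
  have hopen : IsOpen (f '' G.neighborSet x)ᶜ := ((hfin x).image f).isClosed.isOpen_compl
  have hx : f x ∉ f '' G.neighborSet x := fun ⟨y, hy, hfy⟩ =>
    G.ne_of_adj hy (hf.injective hfy).symm
  obtain ⟨_, hI, hxI, hIsub⟩ :=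
    Real.isTopologicalBasis_Ioo_rat.exists_subset_of_mem_open hx hopen
  simp only [mem_iUnion, mem_singleton_iff] at hI
  obtain ⟨a, b, -, rfl⟩ := hI
  obtain ⟨k, hk⟩ := hq (a, b)
  refine ⟨k, by simpa [U, hk] using hxI, fun ⟨y, hyU, hxy⟩ => hIsub ?_ ⟨y, hxy, rfl⟩⟩
  simpa [U, hk] using hyU

end SimpleGraph

namespace Equiv.Perm

variable {X : Type*} (S : Equiv.Perm X)

theorem measurable_coe_zpow [MeasurableSpace X] {S : Equiv.Perm X} (hS : Measurable S)
    (hS' : Measurable S.symm) : ∀ d : ℤ, Measurable ⇑(S ^ d)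
  | (n : ℕ) => by rw [zpow_natCast, coe_pow]; exact hS.iterate n
  | .negSucc n => by rw [zpow_negSucc, ← inv_pow, coe_pow, inv_def]; exact hS'.iterate (n + 1)

def orbitGraph (N : ℕ) : SimpleGraph X where
  Adj x y := x ≠ y ∧ ∃ d : ℤ, d.natAbs ≤ N ∧ (S ^ d) x = y
  symm := ⟨fun x _ ⟨hxy, d, hd, h⟩ =>
    ⟨hxy.symm, -d, by omega, by rw [← h, zpow_neg, inv_def, symm_apply_apply]⟩⟩
  loopless := ⟨fun _ h => h.1 rfl⟩

theorem neighborSet_orbitGraph_finite (N : ℕ) (x : X) :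
    ((S.orbitGraph N).neighborSet x).Finite :=
  ((Finset.Icc (-(N : ℤ)) N).finite_toSet.image fun d => (S ^ d) x).subset
    fun _ ⟨_, d, hd, h⟩ => ⟨d, by simp only [Finset.coe_Icc, mem_Icc]; omega, h⟩

theorem hasMeasurableNeighborhoods_orbitGraph [MeasurableSpace X] [MeasurableEq X]
    (hS : Measurable S) (hS' : Measurable S.symm) (N : ℕ) :
    (S.orbitGraph N).HasMeasurableNeighborhoods := by
  intro A hA
  have h : {x | ∃ y ∈ A, (S.orbitGraph N).Adj x y} =
      ⋃ d ∈ Finset.Icc (-(N : ℤ)) N, {x | x ≠ (S ^ d) x} ∩ (S ^ d) ⁻¹' A := by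
    ext x
    simp only [orbitGraph, mem_ofPred_eq, mem_iUnion, Finset.mem_Icc, mem_inter_iff, mem_preimage]
    constructor
    · rintro ⟨_, hy, hxy, d, hd, rfl⟩
      exact ⟨d, by omega, hxy, hy⟩
    · rintro ⟨d, hd, hxd, hd'⟩
      exact ⟨_, hd', hxd, d, by omega, rfl⟩
  rw [h]
  exact .biUnion (to_countable _) fun d _ =>
    ((measurableSet_eq_fun measurable_id (measurable_coe_zpow hS hS' d)).compl).inter
      (measurable_coe_zpow hS hS' d hA)

variable {S} {N : ℕ} {A : Set X}

theorem eq_zero_of_mem_of_zpow_mem (haper : ∀ (x : X) (n : ℤ), n ≠ 0 → (S ^ n) x ≠ x)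
    (hA : (S.orbitGraph N).IsIndepSet A) {x : X} {d : ℤ} (hd : d.natAbs ≤ N) (hx : x ∈ A)
    (hdx : (S ^ d) x ∈ A) : d = 0 := by
  by_contra h0
  exact hA hx hdx (haper x d h0).symm ⟨(haper x d h0).symm, d, hd, rfl⟩

theorem disjoint_image_pow_of_isIndepSet
    (haper : ∀ (x : X) (n : ℤ), n ≠ 0 → (S ^ n) x ≠ x)
    (hA : (S.orbitGraph N).IsIndepSet A) {i j : ℕ} (hi : i ≤ N) (hj : j ≤ N) (hij : i ≠ j) :
    _root_.Disjoint (⇑(S ^ i) '' A) (⇑(S ^ j) '' A) := by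
  rw [disjoint_left]
  rintro _ ⟨p, hp, rfl⟩ ⟨q, hq, hqp⟩
  have h : (S ^ (-(j : ℤ) + i)) p = q := by
    rw [zpow_add, mul_apply, zpow_neg, zpow_natCast, zpow_natCast, ← hqp, inv_def,
      symm_apply_apply]
  have := eq_zero_of_mem_of_zpow_mem haper hA (by omega) hp (h ▸ hq)
  omega

variable (S) in
def markerSeq (V : ℕ → ℕ → Set X) : ℕ → Set X
  | 0 => univ
  | n + 1 => (S.orbitGraph (n + 1)).greedyIndepSet (V (n + 1)) (markerSeq V n)

variable {V : ℕ → ℕ → Set X}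

theorem antitone_markerSeq : Antitone (S.markerSeq V) :=
  antitone_nat_of_succ_le fun _ => SimpleGraph.greedyIndepSet_subset

theorem measurableSet_markerSeq [MeasurableSpace X] [MeasurableEq X] (hS : Measurable S)
    (hS' : Measurable S.symm) (hV : ∀ N k, MeasurableSet (V N k)) :
    ∀ n, MeasurableSet (S.markerSeq V n)
  | 0 => .univ
  | n + 1 => SimpleGraph.measurableSet_greedyIndepSet
      (S.hasMeasurableNeighborhoods_orbitGraph hS hS' _) (hV _)
      (measurableSet_markerSeq hS hS' hV n)

theorem isIndepSet_markerSeq (hV : ∀ N k, (S.orbitGraph N).IsIndepSet (V N k)) (n : ℕ) :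
    (S.orbitGraph (n + 1)).IsIndepSet (S.markerSeq V (n + 1)) :=
  SimpleGraph.isIndepSet_greedyIndepSet (hV _)

theorem exists_ge_zpow_mem_markerSeq (hV : ∀ N x, ∃ k, x ∈ V N k) :
    ∀ (n : ℕ) (x : X) (m : ℤ), ∃ i, m ≤ i ∧ (S ^ i) x ∈ S.markerSeq V n
  | 0, _, m => ⟨m, le_rfl, mem_univ _⟩
  | n + 1, x, m => by
    obtain ⟨i, hi, hmem⟩ := exists_ge_zpow_mem_markerSeq hV n x (m + n + 1)
    rcases (S.orbitGraph (n + 1)).mem_greedyIndepSet_or_exists_adj (hV (n + 1)) hmem with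
      h | ⟨_, h, -, d, hd, rfl⟩
    · exact ⟨i, by omega, h⟩
    · refine ⟨d + i, by omega, ?_⟩
      rwa [zpow_add, mul_apply]

theorem eq_of_zpow_mem_iInter_markerSeq (haper : ∀ (x : X) (n : ℤ), n ≠ 0 → (S ^ n) x ≠ x)
    (hV : ∀ N k, (S.orbitGraph N).IsIndepSet (V N k)) {x : X} {a b : ℤ}
    (ha : (S ^ a) x ∈ ⋂ n, S.markerSeq V n) (hb : (S ^ b) x ∈ ⋂ n, S.markerSeq V n) :
    a = b := by
  have hab : (S ^ (a - b)) ((S ^ b) x) = (S ^ a) x := by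
    rw [← mul_apply, ← zpow_add, sub_add_cancel]
  have := eq_zero_of_mem_of_zpow_mem haper (isIndepSet_markerSeq hV (a - b).natAbs) (by omega)
    (mem_iInter.1 hb _) (hab ▸ mem_iInter.1 ha _)
  omega

theorem exists_zpow_mem_markerSeq_sdiff_iInter
    (haper : ∀ (x : X) (n : ℤ), n ≠ 0 → (S ^ n) x ≠ x)
    (hVi : ∀ N k, (S.orbitGraph N).IsIndepSet (V N k)) (hVc : ∀ N x, ∃ k, x ∈ V N k)
    (n : ℕ) (x : X) : ∃ i : ℤ, (S ^ i) x ∈ S.markerSeq V n \ ⋂ m, S.markerSeq V m := by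
  obtain ⟨i, -, hi⟩ := exists_ge_zpow_mem_markerSeq hVc n x 0
  obtain ⟨j, hij, hj⟩ := exists_ge_zpow_mem_markerSeq hVc n x (i + 1)
  by_cases h : (S ^ i) x ∈ ⋂ m, S.markerSeq V m
  · refine ⟨j, hj, fun h' => ?_⟩
    have := eq_of_zpow_mem_iInter_markerSeq haper hVi h' h
    omega
  · exact ⟨i, hi, h⟩

theorem exists_zpow_notMem_markerSeq (haper : ∀ (x : X) (n : ℤ), n ≠ 0 → (S ^ n) x ≠ x)
    (hVi : ∀ N k, (S.orbitGraph N).IsIndepSet (V N k)) (hVc : ∀ N x, ∃ k, x ∈ V N k)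
    (n : ℕ) (x : X) : ∃ i : ℤ, (S ^ i) x ∉ S.markerSeq V (n + 1) := by
  obtain ⟨i, -, hi⟩ := exists_ge_zpow_mem_markerSeq hVc (n + 1) x 0
  refine ⟨1 + i, fun h => ?_⟩
  rw [zpow_add, mul_apply] at h
  exact one_ne_zero (eq_zero_of_mem_of_zpow_mem haper (isIndepSet_markerSeq hVi n) le_add_self hi h)

end Equiv.Perm

/-- vanishing sequence of markers for an aperiodic Borel automorphism. -/
theorem stmt6 {X : Type*} [MeasurableSpace X] [StandardBorelSpace X]
    (S : Equiv.Perm X) (hS : Measurable S) (hS' : Measurable S.symm)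
    (haper : ∀ (x : X) (n : ℤ), n ≠ 0 → (S ^ n) x ≠ x) :
    ∃ B : ℕ → Set X,
      (∀ n, MeasurableSet (B n)) ∧ Antitone B ∧
      (∀ (n : ℕ) (x : X), ∃ i : ℤ, (S ^ i) x ∈ B n) ∧
      (∀ (n : ℕ) (x : X), ∃ i : ℤ, (S ^ i) x ∉ B n) ∧
      (∀ (n : ℕ) (i j : ℕ), i < n → j < n → i ≠ j →
        Disjoint ((fun x => (S ^ i) x) '' B n) ((fun x => (S ^ j) x) '' B n)) ∧
      (⋂ n : ℕ, B n) = ∅ := by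
  choose V hVm hVi hVc using fun N => (S.orbitGraph N).exists_measurableSet_isIndepSet_cover
    (S.neighborSet_orbitGraph_finite N) (S.hasMeasurableNeighborhoods_orbitGraph hS hS' N)
  set D := S.markerSeq V
  have hD := S.measurableSet_markerSeq hS hS' hVm
  refine ⟨fun n => D (n + 1) \ ⋂ m, D m, fun n => (hD _).diff (.iInter hD),
    fun m n hmn => sdiff_subset_sdiff_left (S.antitone_markerSeq (by omega)),
    fun n x => S.exists_zpow_mem_markerSeq_sdiff_iInter haper hVi hVc (n + 1) x,
    fun n x => ?_, fun n i j hi hj hij => ?_, ?_⟩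
  · obtain ⟨i, hi⟩ := S.exists_zpow_notMem_markerSeq haper hVi hVc n x
    exact ⟨i, fun h => hi h.1⟩
  · exact (S.disjoint_image_pow_of_isIndepSet haper (S.isIndepSet_markerSeq hVi n) (by omega)
      (by omega) hij).mono (image_mono sdiff_subset) (image_mono sdiff_subset)
  · refine eq_empty_of_forall_notMem fun x hx => (mem_iInter.1 hx 0).2 (mem_iInter.2 fun m => ?_)
    cases m
    exacts [mem_univ x, (mem_iInter.1 hx _).1]
end

section
/- Let Γ be a free Borel ℤ^d-action on a standard Borel space X generated by commuting Borel automorphisms T_1, ..., T_d. Then for any d-tuple (t_1, ..., t_d) of positive integers there exists a Borel set A such that (i) A is a complete section for Γ (every Γ-orbit meets A), and (ii) the sets T_1^{k_1} ⋯ T_d^{k_d} A for 0 ≤ k_i < t_i, i = 1, ..., d, are pairwise disjoint. -/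
open MeasureTheory Set

/-- The product `T 1 ^ n 1 ⋯ T d ^ n d` of commuting Borel automorphisms. -/
def prodPow {X : Type*} {d : ℕ} (T : Fin d → Equiv.Perm X)
    (hcomm : ∀ i j, Commute (T i) (T j)) (n : Fin d → ℤ) : Equiv.Perm X :=
  Finset.univ.noncommProd (fun i => (T i) ^ (n i))
    (fun i _ j _ _ => (hcomm i j).zpow_zpow (n i) (n j))

private lemma perm_pow_measurable {X : Type*} [MeasurableSpace X] (g : Equiv.Perm X)
    (hg : Measurable g) (k : ℕ) : Measurable ⇑(g ^ k) := by
  induction k with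
  | zero => simpa using measurable_id
  | succ k ih => rw [pow_succ, Equiv.Perm.coe_mul]; exact ih.comp hg

private lemma perm_zpow_measurable {X : Type*} [MeasurableSpace X] (g : Equiv.Perm X)
    (hg : Measurable g) (hg' : Measurable g.symm) (z : ℤ) : Measurable ⇑(g ^ z) := by
  cases z with
  | ofNat k => rw [Int.ofNat_eq_coe, zpow_natCast]; exact perm_pow_measurable g hg k
  | negSucc k =>
    rw [zpow_negSucc, ← inv_pow]
    exact perm_pow_measurable g⁻¹ (by simpa [Equiv.Perm.inv_def] using hg') (k + 1)

private lemma measurable_prodPow {X : Type*} [MeasurableSpace X] {d : ℕ}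
    (T : Fin d → Equiv.Perm X) (hmeas : ∀ i, Measurable (T i))
    (hmeas' : ∀ i, Measurable (T i).symm)
    (hcomm : ∀ i j, Commute (T i) (T j)) (n : Fin d → ℤ) :
    Measurable ⇑(prodPow T hcomm n) := by
  unfold prodPow
  refine Finset.noncommProd_induction _ _ _ (fun g : Equiv.Perm X => Measurable ⇑g) ?_ ?_ ?_
  · intro a b ha hb; rw [Equiv.Perm.coe_mul]; exact ha.comp hb
  · simpa using measurable_id
  · intro i _; exact perm_zpow_measurable (T i) (hmeas i) (hmeas' i) (n i)

private lemma prodPow_zero {X : Type*} {d : ℕ} (T : Fin d → Equiv.Perm X)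
    (hcomm : ∀ i j, Commute (T i) (T j)) :
    prodPow T hcomm 0 = 1 := by
  unfold prodPow
  exact (Finset.noncommProd_eq_pow_card _ _ _ 1 (fun i _ => by simp)).trans (one_pow _)

private lemma prodPow_add {X : Type*} {d : ℕ} (T : Fin d → Equiv.Perm X)
    (hcomm : ∀ i j, Commute (T i) (T j)) (n m : Fin d → ℤ) :
    prodPow T hcomm (n + m) = prodPow T hcomm n * prodPow T hcomm m := by
  unfold prodPow
  refine Eq.trans ?_ (Finset.noncommProd_mul_distrib (s := Finset.univ)
    (fun i => T i ^ n i) (fun i => T i ^ m i)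
    (fun i _ j _ _ => (hcomm i j).zpow_zpow _ _)
    (fun i _ j _ _ => (hcomm i j).zpow_zpow _ _)
    (fun i _ j _ _ => (hcomm i j).zpow_zpow _ _))
  exact Finset.noncommProd_congr rfl (fun i _ => by simp [zpow_add]) _

private lemma prodPow_neg {X : Type*} {d : ℕ} (T : Fin d → Equiv.Perm X)
    (hcomm : ∀ i j, Commute (T i) (T j)) (n : Fin d → ℤ) :
    prodPow T hcomm (-n) = (prodPow T hcomm n)⁻¹ := by
  refine eq_inv_of_mul_eq_one_left ?_
  rw [← prodPow_add, neg_add_cancel, prodPow_zero]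

set_option maxHeartbeats 2000000 in
/-- weak Rokhlin Lemma for free Borel ℤ^d-actions generated by
commuting Borel automorphisms `T 1, ..., T d`. -/
theorem stmt7 {X : Type*} [MeasurableSpace X] [StandardBorelSpace X]
    (d : ℕ) (T : Fin d → Equiv.Perm X)
    (hmeas : ∀ i, Measurable (T i)) (hmeas' : ∀ i, Measurable (T i).symm)
    (hcomm : ∀ i j, Commute (T i) (T j))
    (hfree : ∀ (n : Fin d → ℤ) (x : X), (prodPow T hcomm n) x = x → n = 0)
    (t : Fin d → ℕ) (ht : ∀ i, 0 < t i) :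
    ∃ A : Set X, MeasurableSet A ∧
      (∀ x : X, ∃ n : Fin d → ℤ, (prodPow T hcomm n) x ∈ A) ∧
      (∀ k k' : Fin d → ℕ, (∀ i, k i < t i) → (∀ i, k' i < t i) → k ≠ k' →
        Disjoint ((fun x => (prodPow T hcomm (fun i => (k i : ℤ))) x) '' A)
          ((fun x => (prodPow T hcomm (fun i => (k' i : ℤ))) x) '' A)) := by
  classical
  obtain ⟨f, hf⟩ := exists_measurableEmbedding_real X
  -- the countable family of Borel sets (preimages of rational intervals)
  obtain ⟨e, he⟩ := exists_surjective_nat (ℚ × ℚ)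
  set U : ℕ → Set X := fun n => f ⁻¹' (Ioo ((e n).1 : ℝ) ((e n).2 : ℝ)) with hUdef
  have hU : ∀ n, MeasurableSet (U n) := fun n => hf.measurable measurableSet_Ioo
  have hUqr : ∀ q r : ℚ, ∃ n, U n = f ⁻¹' (Ioo ((q : ℝ)) ((r : ℝ))) := by
    intro q r
    obtain ⟨n, hn⟩ := he (q, r)
    refine ⟨n, ?_⟩
    simp only [hUdef, hn]
  -- the finite set of relevant nonzero displacements
  set F : Finset (Fin d → ℤ) :=
    (Fintype.piFinset fun i => Finset.Ioo (-(t i : ℤ)) (t i)).filter (· ≠ 0) with hFdef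
  have hFmem : ∀ m : Fin d → ℤ,
      m ∈ F ↔ (∀ i, -(t i : ℤ) < m i ∧ m i < t i) ∧ m ≠ 0 := by
    intro m
    simp [hFdef, Fintype.mem_piFinset, Finset.mem_Ioo]
  have hFneg : ∀ m ∈ F, -m ∈ F := by
    intro m hm
    rw [hFmem] at hm ⊢
    refine ⟨fun i => ?_, fun h => hm.2 (by simpa using congrArg Neg.neg h)⟩
    have := hm.1 i
    simp only [Pi.neg_apply]
    omega
  have hne_self : ∀ (m : Fin d → ℤ), m ∈ F → ∀ x : X, prodPow T hcomm m x ≠ x := by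
    intro m hm x h
    exact ((hFmem m).1 hm).2 (hfree m x h)
  -- each point has a "color candidate": a basic set containing it but none of its neighbors
  have hP : ∀ x : X, ∃ n : ℕ, x ∈ U n ∧ ∀ m ∈ F, prodPow T hcomm m x ∉ U n := by
    intro x
    set S : Finset ℝ := F.image (fun m => f (prodPow T hcomm m x)) with hS
    have hSne : ∀ s ∈ S, s ≠ f x := by
      intro s hs
      obtain ⟨m, hm, rfl⟩ := Finset.mem_image.1 hs
      intro h
      exact hne_self m hm x (hf.injective h)
    set δ : ℝ := if h : S.Nonempty then S.inf' h (fun s => |s - f x|) else 1 with hδdef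
    have hδpos : 0 < δ := by
      rw [hδdef]
      split_ifs with h
      · rw [Finset.lt_inf'_iff]
        intro s hs
        exact abs_pos.2 (sub_ne_zero.2 (hSne s hs))
      · norm_num
    have hδle : ∀ s ∈ S, δ ≤ |s - f x| := by
      intro s hs
      rw [hδdef]
      rw [dif_pos ⟨s, hs⟩]
      exact Finset.inf'_le _ hs
    obtain ⟨q, hq1, hq2⟩ := exists_rat_btwn (show f x - δ < f x by linarith)
    obtain ⟨r, hr1, hr2⟩ := exists_rat_btwn (show f x < f x + δ by linarith)
    obtain ⟨n, hn⟩ := hUqr q r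
    refine ⟨n, ?_, ?_⟩
    · rw [hn]
      exact ⟨hq2, hr1⟩
    · intro m hm hmem
      rw [hn] at hmem
      have hsS : f (prodPow T hcomm m x) ∈ S := Finset.mem_image_of_mem _ hm
      have h1 := hδle _ hsS
      have h2 : |f (prodPow T hcomm m x) - f x| < δ := by
        rw [abs_sub_lt_iff]
        obtain ⟨ha, hb⟩ := hmem
        constructor <;> linarith
      linarith
  -- the Borel coloring
  let c : X → ℕ := fun x => Nat.find (hP x)
  have hc : ∀ x, x ∈ U (c x) ∧ ∀ m ∈ F, prodPow T hcomm m x ∉ U (c x) :=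
    fun x => Nat.find_spec (hP x)
  have hcmeas : ∀ n, MeasurableSet {x | c x = n} := by
    intro n
    have heq : {x | c x = n} =
        ({x | x ∈ U n ∧ ∀ m ∈ F, prodPow T hcomm m x ∉ U n} ∩
          ⋂ j ∈ Finset.range n,
            {x | x ∈ U j ∧ ∀ m ∈ F, prodPow T hcomm m x ∉ U j}ᶜ) := by
      ext x
      rw [mem_setOf_eq, show c x = Nat.find (hP x) from rfl, Nat.find_eq_iff]
      simp only [mem_inter_iff, mem_iInter, Finset.mem_range, mem_compl_iff, mem_setOf_eq]
    have hPm : ∀ n, MeasurableSet {x | x ∈ U n ∧ ∀ m ∈ F, prodPow T hcomm m x ∉ U n} := by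
      intro n
      have : {x | x ∈ U n ∧ ∀ m ∈ F, prodPow T hcomm m x ∉ U n} =
          U n ∩ ⋂ m ∈ F, (fun x => prodPow T hcomm m x) ⁻¹' (U n)ᶜ := by
        ext x
        simp [mem_iInter]
      rw [this]
      exact (hU n).inter (Finset.measurableSet_biInter _ fun m _ =>
        (hU n).compl.preimage (measurable_prodPow T hmeas hmeas' hcomm m))
    rw [heq]
    exact (hPm n).inter (Finset.measurableSet_biInter _ fun j _ => (hPm j).compl)
  -- adjacent points have different colors
  have hcne : ∀ x, ∀ m ∈ F, c (prodPow T hcomm m x) ≠ c x := by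
    intro x m hm h
    have h1 := (hc (prodPow T hcomm m x)).1
    rw [h] at h1
    exact (hc x).2 m hm h1
  -- greedy construction of the maximal independent set
  let Cum : ℕ → Set X := fun n => n.rec {x | c x = 0}
    (fun n Cn => Cn ∪ {x | c x = n + 1 ∧ ∀ m ∈ F, prodPow T hcomm m x ∉ Cn})
  have Cum0 : Cum 0 = {x | c x = 0} := rfl
  have CumS : ∀ n, Cum (n + 1) =
      Cum n ∪ {x | c x = n + 1 ∧ ∀ m ∈ F, prodPow T hcomm m x ∉ Cum n} := fun n => rfl
  have Cmeas : ∀ n, MeasurableSet (Cum n) := by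
    intro n
    induction n with
    | zero => exact hcmeas 0
    | succ n ih =>
      rw [CumS]
      refine ih.union ((hcmeas (n + 1)).inter ?_)
      have : {x | ∀ m ∈ F, prodPow T hcomm m x ∉ Cum n} =
          ⋂ m ∈ F, (fun x => prodPow T hcomm m x) ⁻¹' (Cum n)ᶜ := by
        ext x; simp [mem_iInter]
      show MeasurableSet {x | ∀ m ∈ F, prodPow T hcomm m x ∉ Cum n}
      rw [this]
      exact Finset.measurableSet_biInter _ fun m _ =>
        ih.compl.preimage (measurable_prodPow T hmeas hmeas' hcomm m)
  have Cmono : Monotone Cum := monotone_nat_of_le_succ fun n => by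
    rw [CumS]; exact subset_union_left
  have c_le : ∀ n x, x ∈ Cum n → c x ≤ n := by
    intro n
    induction n with
    | zero => intro x hx; exact le_of_eq hx
    | succ n ih =>
      intro x hx
      rcases hx with hx | hx
      · exact (ih x hx).trans (Nat.le_succ n)
      · exact le_of_eq hx.1
  have mem_Cum_c : ∀ n x, x ∈ Cum n → x ∈ Cum (c x) := by
    intro n
    induction n with
    | zero => intro x hx; rw [show c x = 0 from hx] ; exact hx
    | succ n ih =>
      intro x hx
      rcases hx with hx | hx
      · exact ih x hx
      · rw [hx.1]; exact Or.inr hx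
  let A : Set X := ⋃ n, Cum n
  have hAmeas : MeasurableSet A := MeasurableSet.iUnion Cmeas
  have mem_A_c : ∀ x, x ∈ A → x ∈ Cum (c x) := by
    rintro x hx
    obtain ⟨_, ⟨n, rfl⟩, hn⟩ := hx
    exact mem_Cum_c n x hn
  -- independence
  have key : ∀ x y : X, ∀ m ∈ F, y = prodPow T hcomm m x → x ∈ A → y ∈ A →
      c y < c x → False := by
    intro x y m hm hy hxA hyA hlt
    have hx' := mem_A_c x hxA
    obtain ⟨n, hn⟩ : ∃ n, c x = n + 1 := ⟨c x - 1, by omega⟩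
    rw [hn] at hx'
    rcases hx' with hx' | hx'
    · have := c_le n x hx'; omega
    · refine hx'.2 m hm ?_
      rw [← hy]
      exact Cmono (show c y ≤ n by omega) (mem_A_c y hyA)
  have indep : ∀ x ∈ A, ∀ m ∈ F, prodPow T hcomm m x ∉ A := by
    intro x hx m hm hy
    set y := prodPow T hcomm m x with hydef
    have hxy : x = prodPow T hcomm (-m) y := by
      rw [hydef, ← Equiv.Perm.mul_apply, ← prodPow_add, neg_add_cancel, prodPow_zero,
        Equiv.Perm.one_apply]
    rcases lt_or_gt_of_ne (hcne x m hm) with h | h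
    · exact key x y m hm hydef hx hy h
    · exact key y x (-m) (hFneg m hm) hxy hy hx h
  -- maximality / completeness
  have complete : ∀ x : X, ∃ n : Fin d → ℤ, prodPow T hcomm n x ∈ A := by
    intro x
    by_cases hx : x ∈ A
    · exact ⟨0, by rw [prodPow_zero]; exact hx⟩
    · have hx' : x ∉ Cum (c x) := fun h => hx (mem_iUnion.2 ⟨c x, h⟩)
      rcases hn : c x with _ | n
      · exact absurd (show x ∈ Cum 0 from hn) (hn ▸ hx')
      · rw [hn, CumS] at hx'
        have h2 : ¬ (c x = n + 1 ∧ ∀ m ∈ F, prodPow T hcomm m x ∉ Cum n) :=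
          fun h => hx' (Or.inr h)
        push_neg at h2
        obtain ⟨m, hm, hmem⟩ := h2 hn
        exact ⟨m, mem_iUnion.2 ⟨n, hmem⟩⟩
  refine ⟨A, hAmeas, complete, ?_⟩
  -- disjointness of the box translates
  intro k k' hk hk' hne
  rw [Set.disjoint_left]
  rintro z ⟨a, ha, hza⟩ ⟨a', ha', hza'⟩
  let m : Fin d → ℤ := (fun i => -(k i : ℤ)) + fun i => (k' i : ℤ)
  have hm : m ∈ F := by
    rw [hFmem]
    constructor
    · intro i
      have h1 := hk i
      have h2 := hk' i
      simp only [m, Pi.add_apply]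
      omega
    · intro h0
      apply hne
      funext i
      have := congrFun h0 i
      simp only [m, Pi.add_apply, Pi.zero_apply] at this
      omega
  have haa : prodPow T hcomm m a' = a := by
    have : prodPow T hcomm (fun i => (k' i : ℤ)) a' = prodPow T hcomm (fun i => (k i : ℤ)) a :=
      hza'.trans hza.symm
    calc prodPow T hcomm m a'
        = prodPow T hcomm (fun i => -(k i : ℤ))
            (prodPow T hcomm (fun i => (k' i : ℤ)) a') := by
          rw [← Equiv.Perm.mul_apply, ← prodPow_add]
      _ = prodPow T hcomm (fun i => -(k i : ℤ))
            (prodPow T hcomm (fun i => (k i : ℤ)) a) := by rw [this]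
      _ = a := by
          rw [← Equiv.Perm.mul_apply, ← prodPow_add,
            show (fun i => -(k i : ℤ)) + (fun i => (k i : ℤ)) = 0 by funext i; simp,
            prodPow_zero, Equiv.Perm.one_apply]
  exact indep a' ha' m hm (haa ▸ ha)
end

section
/- Let S, T be commuting Borel automorphisms of a standard Borel space X generating a free Borel ℤ²-action. Then for each pair (n, m) of positive integers there exists a Borel set A such that A is a complete section for the ℤ²-action, its complement is also a complete section, and the sets S^i T^j A for 0 ≤ i < n, 0 ≤ j < m are pairwise disjoint. -/
/-!
Join `x` to `S^a T^b x` for every `(a, b) ≠ 0` in the box `[-n, n] × [-m, m]`. This is a Borel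
graph of bounded degree, loopless by freeness. A countable separating family `B` of Borel sets
colours it properly with countably many Borel colours (record, for each neighbour `y` of `x`, the
first `k` with `x ∈ B k`, `y ∉ B k`), and adding the colour classes one after the other, each
minus the neighbours of what was already chosen, gives a Borel maximal independent set `A`.
Independence makes the translates `S^i T^j A` disjoint and `A ∩ S A = ∅`, so `Aᶜ` meets every
orbit; maximality makes `A` meet every orbit.
-/

open Set

section BorelGraph

variable {X ι : Type*}

def greedySelection (g : ι → X → X) (c : X → ℕ) : ℕ → Set X
  | 0 => ∅
  | k + 1 => greedySelection g c k ∪ ({x | c x = k} \ ⋃ i, g i ⁻¹' greedySelection g c k)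

variable {g : ι → X → X} {c : X → ℕ}

theorem monotone_greedySelection : Monotone (greedySelection g c) :=
  monotone_nat_of_le_succ fun _ => subset_union_left

theorem apply_notMem_greedySelection (hsymm : ∀ i x, ∃ j, g j (g i x) = x)
    (hc : ∀ i x, c (g i x) ≠ c x) (k : ℕ) {i : ι} {x : X}
    (hx : x ∈ greedySelection g c k) : g i x ∉ greedySelection g c k := by
  induction k generalizing i x with
  | zero => exact hx.elim
  | succ k ih =>
    rintro hgx
    obtain ⟨j, hj⟩ := hsymm i x
    rcases hx with hx | ⟨hxk, hxfree⟩ <;> rcases hgx with hgx | ⟨hgxk, hgxfree⟩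
    · exact ih hx hgx
    · exact hgxfree (mem_iUnion.2 ⟨j, by simpa [hj] using hx⟩)
    · exact hxfree (mem_iUnion.2 ⟨i, hgx⟩)
    · exact hc i x (hgxk.trans hxk.symm)

theorem mem_greedySelection_succ_or_exists_apply_mem (x : X) :
    x ∈ greedySelection g c (c x + 1) ∨ ∃ i, g i x ∈ greedySelection g c (c x) := by
  by_cases h : x ∈ ⋃ i, g i ⁻¹' greedySelection g c (c x)
  · exact Or.inr (mem_iUnion.1 h)
  · exact Or.inl (Or.inr ⟨rfl, h⟩)

variable [MeasurableSpace X]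

theorem measurableSet_greedySelection [Countable ι] (hg : ∀ i, Measurable (g i))
    (hc : Measurable c) (k : ℕ) : MeasurableSet (greedySelection g c k) := by
  induction k with
  | zero => exact MeasurableSet.empty
  | succ k ih =>
    exact ih.union ((hc (measurableSet_singleton k)).diff (.iUnion fun i => hg i ih))

theorem exists_seq_measurableSet_mem_notMem [MeasurableSpace.CountablySeparated X] :
    ∃ B : ℕ → Set X, (∀ k, MeasurableSet (B k)) ∧
      ∀ x y, x ≠ y → ∃ k, x ∈ B k ∧ y ∉ B k := by
  obtain ⟨S, hSmeas, hS⟩ := exists_seq_separating X MeasurableSet.empty univ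
  classical
  refine ⟨fun k => if Even k then S (k / 2) else (S (k / 2))ᶜ, fun k => ?_, fun x y hxy => ?_⟩
  · dsimp only
    split_ifs
    exacts [hSmeas _, (hSmeas _).compl]
  · obtain ⟨n, hn⟩ : ∃ n, ¬(x ∈ S n ↔ y ∈ S n) := by
      by_contra! h
      exact hxy (hS x trivial y trivial h)
    by_cases hx : x ∈ S n
    · exact ⟨2 * n, by simp_all⟩
    · refine ⟨2 * n + 1, ?_⟩
      have : (2 * n + 1) / 2 = n := by omega
      simp_all

theorem exists_measurable_coloring [MeasurableSpace.CountablySeparated X] [Finite ι]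
    (hg : ∀ i, Measurable (g i)) (hfix : ∀ i x, g i x ≠ x) :
    ∃ c : X → ℕ, Measurable c ∧ ∀ i x, c (g i x) ≠ c x := by
  classical
  obtain ⟨B, hBmeas, hB⟩ := exists_seq_measurableSet_mem_notMem (X := X)
  have hsep (x : X) (i : ι) : ∃ k, x ∈ B k ∧ g i x ∉ B k := hB x (g i x) (hfix i x).symm
  let sepIndex : X → ι → ℕ := fun x i => Nat.find (hsep x i)
  have hmeas : Measurable sepIndex := measurable_pi_iff.2 fun i =>
    measurable_find (hsep · i) fun k => (hBmeas k).inter (hg i (hBmeas k).compl)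
  obtain ⟨e, he⟩ := Countable.exists_injective_nat (ι → ℕ)
  refine ⟨e ∘ sepIndex, Measurable.of_discrete.comp hmeas, fun i x hcx => ?_⟩
  have hidx : Nat.find (hsep (g i x) i) = Nat.find (hsep x i) := congrFun (he hcx) i
  have hx := Nat.find_spec (hsep x i)
  have hgx := (Nat.find_spec (hsep (g i x) i)).1
  rw [hidx] at hgx
  exact hx.2 hgx

theorem exists_measurableSet_maximal_independent [MeasurableSpace.CountablySeparated X]
    [Finite ι] (hg : ∀ i, Measurable (g i)) (hfix : ∀ i x, g i x ≠ x)
    (hsymm : ∀ i x, ∃ j, g j (g i x) = x) :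
    ∃ A : Set X, MeasurableSet A ∧ (∀ i x, x ∈ A → g i x ∉ A) ∧
      ∀ x, x ∈ A ∨ ∃ i, g i x ∈ A := by
  obtain ⟨c, hcmeas, hc⟩ := exists_measurable_coloring hg hfix
  refine ⟨⋃ k, greedySelection g c k,
    .iUnion (measurableSet_greedySelection hg hcmeas), fun i x hx hgx => ?_, fun x => ?_⟩
  · obtain ⟨k, hk⟩ := mem_iUnion.1 hx
    obtain ⟨l, hl⟩ := mem_iUnion.1 hgx
    exact apply_notMem_greedySelection hsymm hc (max k l)
      (monotone_greedySelection (le_max_left k l) hk)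
      (monotone_greedySelection (le_max_right k l) hl)
  · rcases mem_greedySelection_succ_or_exists_apply_mem (g := g) (c := c) x with h | ⟨i, h⟩
    exacts [Or.inl (mem_iUnion_of_mem _ h), Or.inr ⟨i, mem_iUnion_of_mem _ h⟩]

end BorelGraph

section PairAction

def measurablePerms (X : Type*) [MeasurableSpace X] : Subgroup (Equiv.Perm X) where
  carrier := {U | Measurable U ∧ Measurable U.symm}
  mul_mem' hU hV := ⟨hU.1.comp hV.1, hV.2.comp hU.2⟩
  one_mem' := ⟨measurable_id, measurable_id⟩
  inv_mem' hU := ⟨hU.2, hU.1⟩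

variable {X : Type*}

def zpowPair (S T : Equiv.Perm X) (d : ℤ × ℤ) : Equiv.Perm X := S ^ d.1 * T ^ d.2

variable {S T : Equiv.Perm X}

theorem zpowPair_add (h : Commute S T) (d e : ℤ × ℤ) :
    zpowPair S T (d + e) = zpowPair S T d * zpowPair S T e := by
  simp only [zpowPair, Prod.fst_add, Prod.snd_add, zpow_add]
  exact ((h.symm.zpow_zpow d.2 e.1).mul_mul_mul_comm _ _).symm

theorem zpowPair_neg_apply_zpowPair_apply (h : Commute S T) (d : ℤ × ℤ) (x : X) :
    zpowPair S T (-d) (zpowPair S T d x) = x := by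
  rw [← Equiv.Perm.mul_apply, ← zpowPair_add h, neg_add_cancel]
  simp [zpowPair]

theorem eq_zpowPair_sub_apply_of_zpowPair_apply_eq (h : Commute S T) {d e : ℤ × ℤ} {a b : X}
    (hab : zpowPair S T d a = zpowPair S T e b) : b = zpowPair S T (d - e) a := by
  rw [sub_eq_neg_add, zpowPair_add h, Equiv.Perm.mul_apply, hab,
    zpowPair_neg_apply_zpowPair_apply h]

theorem pow_apply_pow_apply_eq_zpowPair (i j : ℕ) (x : X) :
    (S ^ i) ((T ^ j) x) = zpowPair S T (i, j) x := by
  simp [zpowPair]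

variable [MeasurableSpace X]

theorem measurable_zpowPair (hS : Measurable S) (hS' : Measurable S.symm)
    (hT : Measurable T) (hT' : Measurable T.symm) (d : ℤ × ℤ) : Measurable (zpowPair S T d) :=
  (mul_mem (zpow_mem (show S ∈ measurablePerms X from ⟨hS, hS'⟩) d.1)
    (zpow_mem (show T ∈ measurablePerms X from ⟨hT, hT'⟩) d.2)).1

theorem exists_measurableSet_zpowPair_maximal_independent
    [MeasurableSpace.CountablySeparated X]
    (hS : Measurable S) (hS' : Measurable S.symm) (hT : Measurable T) (hT' : Measurable T.symm)
    (hcomm : Commute S T) (hfree : ∀ d x, zpowPair S T d x = x → d = 0)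
    {D : Finset (ℤ × ℤ)} (hD₀ : 0 ∉ D) (hD_neg : ∀ d ∈ D, -d ∈ D) :
    ∃ A : Set X, MeasurableSet A ∧ (∀ d ∈ D, ∀ x ∈ A, zpowPair S T d x ∉ A) ∧
      ∀ x, x ∈ A ∨ ∃ d ∈ D, zpowPair S T d x ∈ A := by
  obtain ⟨A, hA, hind, hmax⟩ := exists_measurableSet_maximal_independent
    (g := fun d : D => zpowPair S T d) (fun d => measurable_zpowPair hS hS' hT hT' d)
    (fun d x hx => hD₀ (hfree d x hx ▸ d.2))
    (fun d x => ⟨⟨-d, hD_neg d d.2⟩, zpowPair_neg_apply_zpowPair_apply hcomm d x⟩)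
  refine ⟨A, hA, fun d hd x hx => hind ⟨d, hd⟩ x hx, fun x => ?_⟩
  rcases hmax x with hx | ⟨d, hd⟩
  exacts [Or.inl hx, Or.inr ⟨d, d.2, hd⟩]

end PairAction

theorem stmt8_general {X : Type*} [MeasurableSpace X] [StandardBorelSpace X]
    (S T : Equiv.Perm X) (hS : Measurable S) (hS' : Measurable S.symm)
    (hT : Measurable T) (hT' : Measurable T.symm)
    (hcomm : Commute S T)
    (hfree : ∀ (n m : ℤ) (x : X), ((S ^ n) * (T ^ m)) x = x → n = 0 ∧ m = 0)
    (n m : ℕ) (hn : 0 < n) :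
    ∃ A : Set X, MeasurableSet A ∧
      (∀ x : X, ∃ i j : ℤ, ((S ^ i) * (T ^ j)) x ∈ A) ∧
      (∀ x : X, ∃ i j : ℤ, ((S ^ i) * (T ^ j)) x ∉ A) ∧
      (∀ i j i' j' : ℕ, i < n → j < m → i' < n → j' < m → (i, j) ≠ (i', j') →
        Disjoint ((fun x => (S ^ i) ((T ^ j) x)) '' A)
          ((fun x => (S ^ i') ((T ^ j') x)) '' A)) := by
  -- `D` contains every difference of two points of `[0, n) × [0, m)`, and also `(1, 0)`
  let D : Finset (ℤ × ℤ) := (Finset.Icc (-(n : ℤ)) n ×ˢ Finset.Icc (-(m : ℤ)) m).erase 0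
  have mem_D (d : ℤ × ℤ) :
      d ∈ D ↔ d ≠ 0 ∧ (-n ≤ d.1 ∧ d.1 ≤ n) ∧ (-m ≤ d.2 ∧ d.2 ≤ m) := by
    simp [D]
  obtain ⟨A, hA, hind, hmax⟩ := exists_measurableSet_zpowPair_maximal_independent
    hS hS' hT hT' hcomm (fun d x hx => Prod.ext_iff.2 (hfree d.1 d.2 x hx)) (D := D)
    (by simp [D]) fun d hd => by
      simp only [mem_D, neg_ne_zero, Prod.fst_neg, Prod.snd_neg] at hd ⊢
      exact ⟨hd.1, by omega, by omega⟩
  refine ⟨A, hA, fun x => ?_, fun x => ?_, ?_⟩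
  · rcases hmax x with hx | ⟨d, -, hd⟩
    exacts [⟨0, 0, by simpa using hx⟩, ⟨d.1, d.2, hd⟩]
  · by_cases hx : x ∈ A
    · exact ⟨1, 0, hind (1, 0) ((mem_D _).2 ⟨by simp, by simp; omega, by simp⟩) x hx⟩
    · exact ⟨0, 0, by simpa using hx⟩
  · intro i j i' j' hi hj hi' hj' hne
    refine Set.disjoint_left.2 ?_
    rintro _ ⟨a, ha, rfl⟩ ⟨b, hb, hab⟩
    simp only [pow_apply_pow_apply_eq_zpowPair] at hab
    refine hind _ ?_ a ha (eq_zpowPair_sub_apply_of_zpowPair_apply_eq hcomm hab.symm ▸ hb)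
    simp only [ne_eq, Prod.mk.injEq] at hne
    simp only [mem_D, ne_eq, Prod.ext_iff, Prod.fst_sub, Prod.snd_sub, Prod.fst_zero,
      Prod.snd_zero]
    omega

/-- weak Rokhlin Lemma for a free Borel ℤ²-action generated by
commuting `S`, `T`: for each `(n, m)` there is a Borel set `A` which is a complete
section with complete-section complement, whose translates `S^i T^j A`
(`0 ≤ i < n`, `0 ≤ j < m`) are pairwise disjoint. -/
theorem stmt8 {X : Type*} [MeasurableSpace X] [StandardBorelSpace X]
    (S T : Equiv.Perm X) (hS : Measurable S) (hS' : Measurable S.symm)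
    (hT : Measurable T) (hT' : Measurable T.symm)
    (hcomm : Commute S T)
    (hfree : ∀ (n m : ℤ) (x : X), ((S ^ n) * (T ^ m)) x = x → n = 0 ∧ m = 0)
    (n m : ℕ) (hn : 0 < n) (hm : 0 < m) :
    ∃ A : Set X, MeasurableSet A ∧
      (∀ x : X, ∃ i j : ℤ, ((S ^ i) * (T ^ j)) x ∈ A) ∧
      (∀ x : X, ∃ i j : ℤ, ((S ^ i) * (T ^ j)) x ∉ A) ∧
      (∀ i j i' j' : ℕ, i < n → j < m → i' < n → j' < m → (i, j) ≠ (i', j') →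
        Disjoint ((fun x => (S ^ i) ((T ^ j) x)) '' A)
          ((fun x => (S ^ i') ((T ^ j') x)) '' A)) :=
  stmt8_general S T hS hS' hT hT' hcomm hfree n m hn
end
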